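/- Let G be a finite group with normal subgroup N such that char(k) does not divide |N|. Then the element z = (1/|N|) Σ_{g ∈ N} g of the group algebra kG satisfies ε(z) = 1, z ⊗ z = Δ(z)(1 ⊗ z), and z is central in kG. Consequently the map ρ : (kG)* → (kG)* ⊗ kG, ρ(p) = p ⊗ z, is a right partial coaction of kG on (kG)*. -/

import Mathlib

open TensorProduct LinearMap

namespace PartialHopf

variable (k : Type*) [Field k]

section Coaction

variable (H C : Type*) [Ring H] [Algebra k H] [Coalgebra k H]
  [AddCommGroup C] [Module k C] [Coalgebra k C]

/-- Auxiliary map sending `Σ c ⊗ d` to `Σ c⁰ ⊗ d⁰ ⊗ c¹d¹`. -/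
noncomputable def coactPairMul (ρ : C →ₗ[k] C ⊗[k] H) :
    C ⊗[k] C →ₗ[k] (C ⊗[k] C) ⊗[k] H :=
  (LinearMap.lTensor (C ⊗[k] C) (LinearMap.mul' k H))
    ∘ₗ (TensorProduct.tensorTensorTensorComm k C H C H).toLinearMap
    ∘ₗ (TensorProduct.map ρ ρ)

/-- Auxiliary map sending `c` to `Σ c₁⁰ ⊗ (c₁¹)₁ ⊗ (c₁¹)₂ ε_C(c₂⁰) c₂¹`. -/
noncomputable def coactRight (ρ : C →ₗ[k] C ⊗[k] H) : C →ₗ[k] (C ⊗[k] H) ⊗[k] H :=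
  (TensorProduct.assoc k C H H).symm.toLinearMap
    ∘ₗ (LinearMap.lTensor C
        ((LinearMap.lTensor H (LinearMap.mul' k H)) ∘ₗ (TensorProduct.assoc k H H H).toLinearMap))
    ∘ₗ (TensorProduct.assoc k C (H ⊗[k] H) H).toLinearMap
    ∘ₗ (TensorProduct.map ((LinearMap.lTensor C (Coalgebra.comul (R := k))) ∘ₗ ρ)
          ((TensorProduct.lid k H).toLinearMap
            ∘ₗ (LinearMap.rTensor H (Coalgebra.counit (R := k))) ∘ₗ ρ))
    ∘ₗ (Coalgebra.comul (R := k))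

/-- `C` is a right partial `H`-comodule coalgebra via `ρ` (Definition 2.3 / Batista-Vercruysse):
`(id ⊗ ε_H)ρ(c) = c`, `(Δ_C ⊗ id)ρ(c) = Σ c₁⁰ ⊗ c₂⁰ ⊗ c₁¹c₂¹` and
`(ρ ⊗ id)ρ(c) = Σ c₁⁰ ⊗ (c₁¹)₁ ⊗ (c₁¹)₂ ε_C(c₂⁰)c₂¹`. -/
structure IsPartialCoaction (ρ : C →ₗ[k] C ⊗[k] H) : Prop where
  tensor_counit : ∀ c : C,
    (TensorProduct.rid k C) ((LinearMap.lTensor C (Coalgebra.counit (R := k))) (ρ c)) = c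
  comul_coact : ∀ c : C,
    (LinearMap.rTensor H (Coalgebra.comul (R := k))) (ρ c)
      = coactPairMul k H C ρ (Coalgebra.comul (R := k) c)
  coact_coact : ∀ c : C,
    (LinearMap.rTensor H ρ) (ρ c) = coactRight k H C ρ c

end Coaction


section CoactionAux

variable {k H C : Type*} [Field k] [Ring H] [Algebra k H] [Coalgebra k H]
  [AddCommGroup C] [Module k C] [Coalgebra k C]

lemma mulAux (y : H ⊗[k] H) (w : H) :
    LinearMap.lTensor H (LinearMap.mul' k H) ((TensorProduct.assoc k H H H) (y ⊗ₜ[k] w))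
      = y * ((1 : H) ⊗ₜ[k] w) := by
  induction y using TensorProduct.induction_on with
  | zero => rw [zero_tmul, LinearEquiv.map_zero, map_zero, zero_mul]
  | tmul a b => simp [Algebra.TensorProduct.tmul_mul_tmul]
  | add u v hu hv => simp [add_tmul, map_add, add_mul, hu, hv]

lemma pairMulAux (z : H) (x : C ⊗[k] C) :
    coactPairMul k H C ((TensorProduct.mk k C H).flip z) x = x ⊗ₜ[k] (z * z) := by
  induction x using TensorProduct.induction_on with
  | zero => rw [map_zero, zero_tmul]
  | tmul a b =>
      simp [coactPairMul, TensorProduct.tensorTensorTensorComm_tmul,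
        LinearMap.mul'_apply]
  | add u v hu hv => simp [map_add, add_tmul, hu, hv]

lemma coactRightAux (z : H)
    (hz : Coalgebra.comul (R := k) z * ((1 : H) ⊗ₜ[k] z) = z ⊗ₜ[k] z) (c : C) :
    coactRight k H C ((TensorProduct.mk k C H).flip z) c = (c ⊗ₜ[k] z) ⊗ₜ[k] z := by
  have main : ∀ x : C ⊗[k] C,
      (TensorProduct.assoc k C H H).symm
        ((LinearMap.lTensor C
            ((LinearMap.lTensor H (LinearMap.mul' k H))
              ∘ₗ (TensorProduct.assoc k H H H).toLinearMap))
          ((TensorProduct.assoc k C (H ⊗[k] H) H)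
            ((TensorProduct.map
                ((LinearMap.lTensor C (Coalgebra.comul (R := k)))
                  ∘ₗ (TensorProduct.mk k C H).flip z)
                ((TensorProduct.lid k H).toLinearMap
                  ∘ₗ (LinearMap.rTensor H (Coalgebra.counit (R := k)))
                  ∘ₗ (TensorProduct.mk k C H).flip z)) x)))
      = ((((TensorProduct.rid k C)
            ((LinearMap.lTensor C (Coalgebra.counit (R := k))) x)) ⊗ₜ[k] z) ⊗ₜ[k] z) := by
    intro x
    induction x using TensorProduct.induction_on with
    | zero => simp
    | tmul a b =>
        simp only [TensorProduct.map_tmul, LinearMap.comp_apply,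
          TensorProduct.mk_apply, LinearMap.flip_apply, LinearMap.lTensor_tmul,
          LinearMap.rTensor_tmul, LinearEquiv.coe_coe, TensorProduct.lid_tmul,
          TensorProduct.assoc_tmul, TensorProduct.rid_tmul]
        rw [TensorProduct.tmul_smul, LinearEquiv.map_smul, map_smul]
        rw [mulAux (Coalgebra.comul (R := k) z) z, hz]
        simp [TensorProduct.smul_tmul', TensorProduct.tmul_smul]
    | add u v hu hv =>
        simp only [map_add, LinearEquiv.map_add] at *
        rw [hu, hv, TensorProduct.add_tmul, TensorProduct.add_tmul]
  have := main (Coalgebra.comul (R := k) c)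
  rw [Coalgebra.lTensor_counit_comul, TensorProduct.rid_tmul, one_smul] at this
  simpa [coactRight] using this

end CoactionAux

end PartialHopf
namespace PartialHopf
variable (k : Type*) [Field k]

/-- Example 4.2: let `G` be a finite group, `N ⊴ G` with `char k ∤ |N|`,
and `kG` the group Hopf algebra (`Δ(g) = g ⊗ g`, `ε(g) = 1`).  Then
`z = (1/|N|) Σ_{g ∈ N} g` satisfies `ε(z) = 1`, `z ⊗ z = Δ(z)(1 ⊗ z)` and `z` is central in
`kG`; consequently `ρ(p) = p ⊗ z` is a right partial coaction of `kG` on `(kG)*`. -/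
theorem groupAlgebra_average_partialCoaction
    {k : Type*} [Field k] {G : Type*} [Group G] [Fintype G]
    (N : Subgroup G) [N.Normal] [Fintype N]
    [Coalgebra k (MonoidAlgebra k G)]
    (hcomul : ∀ g : G,
      Coalgebra.comul (R := k) (MonoidAlgebra.of k G g)
        = MonoidAlgebra.of k G g ⊗ₜ[k] MonoidAlgebra.of k G g)
    (hcounit : ∀ g : G, Coalgebra.counit (R := k) (MonoidAlgebra.of k G g) = 1)
    (hchar : (Fintype.card N : k) ≠ 0)
    [Coalgebra k (Module.Dual k (MonoidAlgebra k G))] :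
    letI z : MonoidAlgebra k G :=
      (Fintype.card N : k)⁻¹ • ∑ n : N, MonoidAlgebra.of k G (n : G)
    Coalgebra.counit (R := k) z = 1
      ∧ z ⊗ₜ[k] z = Coalgebra.comul (R := k) z * ((1 : MonoidAlgebra k G) ⊗ₜ[k] z)
      ∧ (∀ w : MonoidAlgebra k G, z * w = w * z)
      ∧ IsPartialCoaction k (MonoidAlgebra k G) (Module.Dual k (MonoidAlgebra k G))
          ((TensorProduct.mk k (Module.Dual k (MonoidAlgebra k G)) (MonoidAlgebra k G)).flip z)
  := by
  set c : k := (Fintype.card N : k) with hc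
  set S : MonoidAlgebra k G := ∑ n : N, MonoidAlgebra.of k G (n : G) with hS
  set z : MonoidAlgebra k G := c⁻¹ • S with hzdef
  -- counit of z
  have hcz : Coalgebra.counit (R := k) z = 1 := by
    rw [hzdef, map_smul, hS, map_sum]
    simp only [hcounit]
    rw [Finset.sum_const, Finset.card_univ, nsmul_eq_mul, mul_one, smul_eq_mul]
    exact inv_mul_cancel₀ hchar
  -- comul of z
  have hΔ : Coalgebra.comul (R := k) z
      = c⁻¹ • ∑ n : N, (MonoidAlgebra.of k G (n : G)) ⊗ₜ[k] (MonoidAlgebra.of k G (n : G)) := by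
    rw [hzdef, map_smul, hS, map_sum]
    simp only [hcomul]
  -- S * S = card • S
  have hSS : S * S = (Fintype.card N) • S := by
    rw [hS, Finset.sum_mul_sum]
    have : ∀ n : N, ∑ m : N, MonoidAlgebra.of k G (n : G) * MonoidAlgebra.of k G (m : G) = S := by
      intro n
      rw [hS]
      refine Fintype.sum_equiv (Equiv.mulLeft n) _ _ ?_
      intro m
      simp [MonoidAlgebra.of_apply, ← map_mul]
    simp only [this, Finset.sum_const, Finset.card_univ]
    rw [hS]
  have hzz : z * z = z := by
    rw [hzdef, smul_mul_smul_comm, hSS, ← Nat.cast_smul_eq_nsmul k, smul_smul]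
    congr 1
    rw [← hc]
    field_simp
  -- Δ(z)(1 ⊗ z) = z ⊗ z
  have hΔz : Coalgebra.comul (R := k) z * ((1 : MonoidAlgebra k G) ⊗ₜ[k] z) = z ⊗ₜ[k] z := by
    rw [hΔ, hzdef]
    rw [TensorProduct.tmul_smul, smul_mul_smul_comm, Finset.sum_mul]
    have step : ∀ n : N,
        ((MonoidAlgebra.of k G (n : G)) ⊗ₜ[k] (MonoidAlgebra.of k G (n : G)))
          * ((1 : MonoidAlgebra k G) ⊗ₜ[k] S)
        = (MonoidAlgebra.of k G (n : G)) ⊗ₜ[k] S := by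
      intro n
      rw [Algebra.TensorProduct.tmul_mul_tmul, mul_one]
      congr 1
      rw [hS, Finset.mul_sum]
      refine Fintype.sum_equiv (Equiv.mulLeft n) _ _ ?_
      intro m
      simp [MonoidAlgebra.of_apply, ← map_mul]
    simp only [step]
    rw [TensorProduct.tmul_smul, ← TensorProduct.smul_tmul', smul_smul]
    congr 1
    have hSt : S ⊗ₜ[k] S = ∑ n : N, (MonoidAlgebra.of k G (n : G)) ⊗ₜ[k] S := by
      conv_lhs => rw [hS]
      rw [TensorProduct.sum_tmul]
    rw [hSt]
  refine ⟨hcz, hΔz.symm, ?_, ?_⟩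
  · -- centrality
    have hg : ∀ g : G, z * MonoidAlgebra.of k G g = MonoidAlgebra.of k G g * z := by
      intro g
      rw [hzdef, smul_mul_assoc, mul_smul_comm, hS, Finset.sum_mul, Finset.mul_sum]
      congr 1
      have hmem : ∀ n : N, g⁻¹ * (n : G) * g ∈ N := by
        intro n
        simpa using Subgroup.Normal.conj_mem ‹N.Normal› (n : G) n.2 g⁻¹
      refine Fintype.sum_bijective (fun n => ⟨g⁻¹ * (n : G) * g, hmem n⟩) ?_ _ _ ?_
      · constructor
        · intro a b hab
          have : g⁻¹ * (a : G) * g = g⁻¹ * (b : G) * g := congrArg Subtype.val hab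
          ext
          exact mul_left_cancel (mul_right_cancel this)
        · intro b
          refine ⟨⟨g * (b : G) * g⁻¹, ?_⟩, ?_⟩
          · simpa using Subgroup.Normal.conj_mem ‹N.Normal› (b : G) b.2 g
          · ext; simp [mul_assoc]
      · intro n
        simp only [← map_mul]
        congr 1
        group
    intro w
    induction w using MonoidAlgebra.induction_on with
    | of g => exact hg g
    | add f g hf hgg => rw [mul_add, add_mul, hf, hgg]
    | smul r f hf => rw [mul_smul_comm, hf, smul_mul_assoc]
  · -- the partial coaction
    refine ⟨?_, ?_, ?_⟩
    · intro p
      simp only [LinearMap.flip_apply, TensorProduct.mk_apply, LinearMap.lTensor_tmul, hcz,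
        TensorProduct.rid_tmul, one_smul]
    · intro p
      rw [LinearMap.flip_apply, TensorProduct.mk_apply, LinearMap.rTensor_tmul,
        pairMulAux, hzz]
    · intro p
      rw [LinearMap.flip_apply, TensorProduct.mk_apply, LinearMap.rTensor_tmul,
        coactRightAux _ hΔz, LinearMap.flip_apply, TensorProduct.mk_apply]


end PartialHopf
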